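/- arXiv:2506.23991 — 9 statements merged into one kernel-verified Lean document; each statement's English description precedes it below -/
import Mathlib

section
/- Let Σ × {0} ⊆ M be the constraint subspace, with annihilator {0} × C* and π-orthogonal complement (Σ×{0})^{π⊥} = π({0} × C*). Then (Σ × {0}) ∩ π({0} × C*) = {0} if and only if ker π_cc ⊆ ker π_σc. (Pointwise linear-algebraic content of Proposition 1: the constraint set is Poisson–Dirac exactly when the kernel-nesting condition ker{c,c} ⊆ ker{σ,c} holds.) -/
/-!
By the block form of `π`, the subspace `π({0} × C*)` is the range of `η ↦ (π_σc η, π_cc η)`.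
Such a vector lies in `Σ × {0}` exactly when `π_cc η = 0`, so the intersection is trivial
exactly when `π_σc` vanishes on `ker π_cc`.
-/

open LinearMap

namespace Submodule

variable {R M N : Type*} [Semiring R] [AddCommMonoid M] [Module R M] [AddCommMonoid N] [Module R N]

theorem top_prod_bot_eq_ker_snd :
    (⊤ : Submodule R M).prod (⊥ : Submodule R N) = ker (LinearMap.snd R M N) := by
  ext; simp

theorem bot_prod_top_eq_range_inr :
    (⊥ : Submodule R M).prod (⊤ : Submodule R N) = range (LinearMap.inr R M N) := by
  rw [range_inr]; ext; simp

theorem top_prod_bot_inf_range_prod_eq_bot_iff {P : Type*} [AddCommMonoid P] [Module R P]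
    (f : P →ₗ[R] M) (g : P →ₗ[R] N) :
    (⊤ : Submodule R M).prod (⊥ : Submodule R N) ⊓ range (f.prod g) = ⊥ ↔ ker g ≤ ker f := by
  rw [top_prod_bot_eq_ker_snd, inf_comm, ← map_comap_eq, ← ker_comp, snd_prod,
    ← le_ker_iff_map, ker_prod, le_inf_iff]
  exact and_iff_left le_rfl

end Submodule

theorem constraint_poissonDirac_iff_ker_nesting_general
    (S C : Type*) [AddCommGroup S] [Module ℝ S]
    [AddCommGroup C] [Module ℝ C]
    (Pmap : Module.Dual ℝ S × Module.Dual ℝ C →ₗ[ℝ] S × C)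
    (Pσσ : Module.Dual ℝ S →ₗ[ℝ] S) (Pσc : Module.Dual ℝ C →ₗ[ℝ] S)
    (Pcσ : Module.Dual ℝ S →ₗ[ℝ] C) (Pcc : Module.Dual ℝ C →ₗ[ℝ] C)
    (hblock : ∀ (ξ : Module.Dual ℝ S) (η : Module.Dual ℝ C),
      Pmap (ξ, η) = (Pσσ ξ + Pσc η, Pcσ ξ + Pcc η)) :
    ((⊤ : Submodule ℝ S).prod (⊥ : Submodule ℝ C)) ⊓
        Submodule.map Pmap
          ((⊥ : Submodule ℝ (Module.Dual ℝ S)).prod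
            (⊤ : Submodule ℝ (Module.Dual ℝ C))) = ⊥
      ↔ LinearMap.ker Pcc ≤ LinearMap.ker Pσc := by
  have hcolumn : Pmap ∘ₗ inr ℝ _ _ = Pσc.prod Pcc := by
    ext η : 1
    simpa using hblock 0 η
  rw [Submodule.bot_prod_top_eq_range_inr, ← range_comp, hcolumn,
    Submodule.top_prod_bot_inf_range_prod_eq_bot_iff]

/-- The constraint subspace `Σ × {0} ⊆ M = Σ × C` has trivial
intersection with its π-orthogonal complement `π({0} × C*)` if and only if
`ker π_cc ⊆ ker π_σc`. -/
theorem constraint_poissonDirac_iff_ker_nesting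
    (S C : Type*) [AddCommGroup S] [Module ℝ S] [FiniteDimensional ℝ S]
    [AddCommGroup C] [Module ℝ C] [FiniteDimensional ℝ C]
    (Pmap : Module.Dual ℝ S × Module.Dual ℝ C →ₗ[ℝ] S × C)
    (Pσσ : Module.Dual ℝ S →ₗ[ℝ] S) (Pσc : Module.Dual ℝ C →ₗ[ℝ] S)
    (Pcσ : Module.Dual ℝ S →ₗ[ℝ] C) (Pcc : Module.Dual ℝ C →ₗ[ℝ] C)
    (hblock : ∀ (ξ : Module.Dual ℝ S) (η : Module.Dual ℝ C),
      Pmap (ξ, η) = (Pσσ ξ + Pσc η, Pcσ ξ + Pcc η))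
    (hskew : ∀ α β : Module.Dual ℝ S × Module.Dual ℝ C,
      α.1 (Pmap β).1 + α.2 (Pmap β).2 = -(β.1 (Pmap α).1 + β.2 (Pmap α).2)) :
    ((⊤ : Submodule ℝ S).prod (⊥ : Submodule ℝ C)) ⊓
        Submodule.map Pmap
          ((⊥ : Submodule ℝ (Module.Dual ℝ S)).prod
            (⊤ : Submodule ℝ (Module.Dual ℝ C))) = ⊥
      ↔ LinearMap.ker Pcc ≤ LinearMap.ker Pσc :=
  constraint_poissonDirac_iff_ker_nesting_general S C Pmap Pσσ Pσc Pcσ Pcc hblock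
end

section
/- The block map π_cc : C* → C is bijective if and only if both of the following hold: (PT.1) (Σ × {0}) ∩ π({0} × C*) = {0}, and (PT.2) (Σ × {0}) + range(π) = M. (Pointwise linear-algebraic content of Proposition 3: the matrix of constraint brackets {c,c} is invertible exactly when the constraint set is a Poisson transversal.) -/
/-!
Write `π(0, η) = (π_σc η, π_cc η)`. If `π_cc` is bijective, (PT.1) is injectivity of `π_cc` and
(PT.2) follows from its surjectivity. Conversely, let `π_cc η = 0`: by (PT.1) then `π(0, η) = 0`,
and skew-symmetry gives `η ((π β).2) = -⟨β, π(0, η)⟩ = 0` for every `β`, while (PT.2) says that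
these second components `(π β).2` exhaust `C`; hence `η = 0`. So `π_cc` is injective, and
bijective because `dim C* = dim C`.
-/

open LinearMap Module

namespace Submodule

variable {R M N : Type*} [Ring R] [AddCommGroup M] [Module R M] [AddCommGroup N] [Module R N]

theorem prod_top_bot_inf_eq_bot_iff {p : Submodule R (M × N)} :
    (⊤ : Submodule R M).prod ⊥ ⊓ p = ⊥ ↔ ∀ x ∈ p, x.2 = 0 → x = 0 := by
  simp only [eq_bot_iff, SetLike.le_def, mem_inf, mem_prod, mem_top, mem_bot, true_and]
  exact ⟨fun h x hx hx2 => h ⟨hx2, hx⟩, fun h x hx => h x hx.2 hx.1⟩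

theorem prod_top_bot_sup_eq_top_iff {p : Submodule R (M × N)} :
    (⊤ : Submodule R M).prod ⊥ ⊔ p = ⊤ ↔ p.map (LinearMap.snd R M N) = ⊤ := by
  rw [← comap_snd, ← ker, sup_comm, ← comap_map_eq, comap_snd, prod_eq_top_iff,
    and_iff_right rfl]

end Submodule

theorem eq_zero_of_skew_of_apply_inr_eq_zero {R S C : Type*} [CommRing R]
    [AddCommGroup S] [Module R S] [AddCommGroup C] [Module R C]
    (P : Dual R S × Dual R C →ₗ[R] S × C)
    (hskew : ∀ α β : Dual R S × Dual R C,
      α.1 (P β).1 + α.2 (P β).2 = -(β.1 (P α).1 + β.2 (P α).2))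
    (hsnd : range (snd R S C ∘ₗ P) = ⊤) {η : Dual R C} (hη : P (0, η) = 0) : η = 0 := by
  ext c
  obtain ⟨β, rfl⟩ := range_eq_top.mp hsnd c
  simpa [hη] using hskew (0, η) β

theorem cc_block_bijective_iff_poisson_transversal_general
    (S C : Type*) [AddCommGroup S] [Module ℝ S]
    [AddCommGroup C] [Module ℝ C] [FiniteDimensional ℝ C]
    (Pmap : Module.Dual ℝ S × Module.Dual ℝ C →ₗ[ℝ] S × C)
    (Pσσ : Module.Dual ℝ S →ₗ[ℝ] S) (Pσc : Module.Dual ℝ C →ₗ[ℝ] S)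
    (Pcσ : Module.Dual ℝ S →ₗ[ℝ] C) (Pcc : Module.Dual ℝ C →ₗ[ℝ] C)
    (hblock : ∀ (ξ : Module.Dual ℝ S) (η : Module.Dual ℝ C),
      Pmap (ξ, η) = (Pσσ ξ + Pσc η, Pcσ ξ + Pcc η))
    (hskew : ∀ α β : Module.Dual ℝ S × Module.Dual ℝ C,
      α.1 (Pmap β).1 + α.2 (Pmap β).2 = -(β.1 (Pmap α).1 + β.2 (Pmap α).2)) :
    Function.Bijective Pcc
      ↔ (((⊤ : Submodule ℝ S).prod (⊥ : Submodule ℝ C)) ⊓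
            Submodule.map Pmap
              ((⊥ : Submodule ℝ (Module.Dual ℝ S)).prod
                (⊤ : Submodule ℝ (Module.Dual ℝ C))) = ⊥
          ∧ ((⊤ : Submodule ℝ S).prod (⊥ : Submodule ℝ C)) ⊔
              LinearMap.range Pmap = ⊤) := by
  have hP0 (η : Dual ℝ C) : Pmap (0, η) = (Pσc η, Pcc η) := by simpa using hblock 0 η
  have hPcc : Pcc = snd ℝ S C ∘ₗ Pmap ∘ₗ inr ℝ _ _ := by ext η; simp [hP0]
  rw [Submodule.prod_top_bot_inf_eq_bot_iff, Submodule.prod_top_bot_sup_eq_top_iff,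
    ← range_comp]
  constructor
  · rintro ⟨hinj, hsurj⟩
    refine ⟨?_, ?_⟩
    · rintro _ ⟨⟨ξ, η⟩, hmem, rfl⟩ hsnd
      obtain rfl : ξ = 0 := by simpa [Submodule.mem_prod] using hmem
      rw [hP0] at hsnd ⊢
      obtain rfl : η = 0 := hinj (hsnd.trans (map_zero Pcc).symm)
      simp
    · rw [eq_top_iff, ← range_eq_top.mpr hsurj, hPcc, ← comp_assoc]
      exact range_comp_le_range _ _
  · rintro ⟨hPT1, hPT2⟩
    have hinj : Function.Injective Pcc := by
      refine (injective_iff_map_eq_zero Pcc).mpr fun η hη => ?_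
      refine eq_zero_of_skew_of_apply_inr_eq_zero Pmap hskew hPT2 ?_
      exact hPT1 _ ⟨(0, η), by simp, rfl⟩ (by rw [hP0, hη])
    exact ⟨hinj, (injective_iff_surjective_of_finrank_eq_finrank
      Subspace.dual_finrank_eq).mp hinj⟩

/-- The block map `π_cc : C* → C` is bijective if and only if the
constraint subspace `Σ × {0}` is a Poisson transversal, i.e. (PT.1)
`(Σ × {0}) ∩ π({0} × C*) = {0}` and (PT.2) `(Σ × {0}) + range(π) = M`. -/
theorem cc_block_bijective_iff_poisson_transversal
    (S C : Type*) [AddCommGroup S] [Module ℝ S] [FiniteDimensional ℝ S]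
    [AddCommGroup C] [Module ℝ C] [FiniteDimensional ℝ C]
    (Pmap : Module.Dual ℝ S × Module.Dual ℝ C →ₗ[ℝ] S × C)
    (Pσσ : Module.Dual ℝ S →ₗ[ℝ] S) (Pσc : Module.Dual ℝ C →ₗ[ℝ] S)
    (Pcσ : Module.Dual ℝ S →ₗ[ℝ] C) (Pcc : Module.Dual ℝ C →ₗ[ℝ] C)
    (hblock : ∀ (ξ : Module.Dual ℝ S) (η : Module.Dual ℝ C),
      Pmap (ξ, η) = (Pσσ ξ + Pσc η, Pcσ ξ + Pcc η))
    (hskew : ∀ α β : Module.Dual ℝ S × Module.Dual ℝ C,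
      α.1 (Pmap β).1 + α.2 (Pmap β).2 = -(β.1 (Pmap α).1 + β.2 (Pmap α).2)) :
    Function.Bijective Pcc
      ↔ (((⊤ : Submodule ℝ S).prod (⊥ : Submodule ℝ C)) ⊓
            Submodule.map Pmap
              ((⊥ : Submodule ℝ (Module.Dual ℝ S)).prod
                (⊤ : Submodule ℝ (Module.Dual ℝ C))) = ⊥
          ∧ ((⊤ : Submodule ℝ S).prod (⊥ : Submodule ℝ C)) ⊔
              LinearMap.range Pmap = ⊤) :=
  cc_block_bijective_iff_poisson_transversal_general S C Pmap Pσσ Pσc Pcσ Pcc hblock hskew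
end

section
/- Assume ker π_cc ⊆ ker π_σc. Then for every ξ ∈ Σ* there exists η ∈ C* such that π_cσ(ξ) + π_cc(η) = 0. (Solvability of the equations defining Δf/Δc in the Poisson–Dirac bracket: the solvability conditions v · {c,σ} · δf/δσ = 0 for v ∈ ker{c,c} are automatically satisfied under the kernel-nesting condition.) -/
/-!
The block `π_cc` is itself skew, so its range is the annihilator of its kernel. For `η ∈ ker π_cc`,
skewness of `π` gives `η (π_cσ ξ) = -ξ (π_σc η)`, which vanishes because `ker π_cc ⊆ ker π_σc`;
hence `-π_cσ ξ` lies in the range of `π_cc`.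
-/

open Module

theorem LinearMap.range_eq_dualCoannihilator_ker_of_skew {K V : Type*} [Field K] [AddCommGroup V]
    [Module K V] (f : Dual K V →ₗ[K] V) (hf : ∀ η ζ : Dual K V, η (f ζ) = -ζ (f η)) :
    LinearMap.range f = (LinearMap.ker f).dualCoannihilator := by
  rw [← Subspace.dualAnnihilator_dualCoannihilator_eq (W := LinearMap.range f)]
  congr 1
  ext η
  rw [Submodule.mem_dualAnnihilator, LinearMap.mem_ker, ← forall_dual_apply_eq_zero_iff K]
  simp only [LinearMap.mem_range, forall_exists_index, forall_apply_eq_imp_iff]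
  exact forall_congr' fun ζ ↦ by rw [hf, neg_eq_zero]

theorem poissonDirac_equations_solvable_general
    (S C : Type*) [AddCommGroup S] [Module ℝ S]
    [AddCommGroup C] [Module ℝ C]
    (Pmap : Module.Dual ℝ S × Module.Dual ℝ C →ₗ[ℝ] S × C)
    (Pσσ : Module.Dual ℝ S →ₗ[ℝ] S) (Pσc : Module.Dual ℝ C →ₗ[ℝ] S)
    (Pcσ : Module.Dual ℝ S →ₗ[ℝ] C) (Pcc : Module.Dual ℝ C →ₗ[ℝ] C)
    (hblock : ∀ (ξ : Module.Dual ℝ S) (η : Module.Dual ℝ C),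
      Pmap (ξ, η) = (Pσσ ξ + Pσc η, Pcσ ξ + Pcc η))
    (hskew : ∀ α β : Module.Dual ℝ S × Module.Dual ℝ C,
      α.1 (Pmap β).1 + α.2 (Pmap β).2 = -(β.1 (Pmap α).1 + β.2 (Pmap α).2))
    (hker : LinearMap.ker Pcc ≤ LinearMap.ker Pσc) :
    ∀ ξ : Module.Dual ℝ S, ∃ η : Module.Dual ℝ C, Pcσ ξ + Pcc η = 0 := by
  intro ξ
  have hcc_skew : ∀ η ζ : Dual ℝ C, η (Pcc ζ) = -ζ (Pcc η) := fun η ζ ↦ by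
    simpa [hblock] using hskew (0, η) (0, ζ)
  have hmixed_skew : ∀ η : Dual ℝ C, η (Pcσ ξ) = -ξ (Pσc η) := fun η ↦ by
    simpa [hblock] using hskew (0, η) (ξ, 0)
  have hmem : -Pcσ ξ ∈ LinearMap.range Pcc := by
    rw [LinearMap.range_eq_dualCoannihilator_ker_of_skew Pcc hcc_skew,
      Submodule.mem_dualCoannihilator]
    intro η hη
    simp [hmixed_skew, LinearMap.mem_ker.mp (hker hη)]
  obtain ⟨η, hη⟩ := hmem
  exact ⟨η, by rw [hη, add_neg_cancel]⟩

/-- Under the kernel-nesting condition `ker π_cc ⊆ ker π_σc`,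
for every `ξ ∈ Σ*` there exists `η ∈ C*` with `π_cσ(ξ) + π_cc(η) = 0`
(solvability of the equations defining `Δf/Δc`). -/
theorem poissonDirac_equations_solvable
    (S C : Type*) [AddCommGroup S] [Module ℝ S] [FiniteDimensional ℝ S]
    [AddCommGroup C] [Module ℝ C] [FiniteDimensional ℝ C]
    (Pmap : Module.Dual ℝ S × Module.Dual ℝ C →ₗ[ℝ] S × C)
    (Pσσ : Module.Dual ℝ S →ₗ[ℝ] S) (Pσc : Module.Dual ℝ C →ₗ[ℝ] S)
    (Pcσ : Module.Dual ℝ S →ₗ[ℝ] C) (Pcc : Module.Dual ℝ C →ₗ[ℝ] C)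
    (hblock : ∀ (ξ : Module.Dual ℝ S) (η : Module.Dual ℝ C),
      Pmap (ξ, η) = (Pσσ ξ + Pσc η, Pcσ ξ + Pcc η))
    (hskew : ∀ α β : Module.Dual ℝ S × Module.Dual ℝ C,
      α.1 (Pmap β).1 + α.2 (Pmap β).2 = -(β.1 (Pmap α).1 + β.2 (Pmap α).2))
    (hker : LinearMap.ker Pcc ≤ LinearMap.ker Pσc) :
    ∀ ξ : Module.Dual ℝ S, ∃ η : Module.Dual ℝ C, Pcσ ξ + Pcc η = 0 :=
  poissonDirac_equations_solvable_general S C Pmap Pσσ Pσc Pcσ Pcc hblock hskew hker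
end

section
/- Let ξ_f, ξ_g ∈ Σ*, and suppose η_f, η_f' ∈ C* both satisfy π_cσ(ξ_f) + π_cc(η) = 0 and η_g, η_g' ∈ C* both satisfy π_cσ(ξ_g) + π_cc(η) = 0. Then η_f − η_f' ∈ ker π_cc and η_g − η_g' ∈ ker π_cc, and ⟨η_f, π_cc(η_g)⟩ = ⟨η_f', π_cc(η_g')⟩. (Solutions of the Poisson–Dirac equations are determined modulo ker{c,c}, and this non-uniqueness does not affect the value of the bracket {f,g}_PD.) -/
/-!
Two solutions of `π_cσ ξ + π_cc η = 0` have the same image under `π_cc`, so they differ by an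
element of `ker π_cc`. Since `π_cc` is skew with respect to the pairing (it is the `C*`-block of
the skew map `π`), an element of `ker π_cc` pairs to zero with the whole image of `π_cc`;
hence `⟨η_f, π_cc η_g⟩` only depends on `η_f` modulo `ker π_cc` and on `π_cc η_g`.
-/

open Module

section

variable {R M N : Type*} [CommRing R] [AddCommGroup M] [Module R M] [AddCommGroup N] [Module R N]

theorem LinearMap.sub_mem_ker_of_add_eq_zero {f : M →ₗ[R] N} {c : N} {a b : M}
    (ha : c + f a = 0) (hb : c + f b = 0) : a - b ∈ LinearMap.ker f :=
  LinearMap.sub_mem_ker_iff.mpr (add_left_cancel (ha.trans hb.symm))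

theorem apply_eq_of_sub_mem_ker_of_skew {A : Dual R M →ₗ[R] M}
    (hA : ∀ α β : Dual R M, α (A β) = -β (A α)) {α α' : Dual R M}
    (h : α - α' ∈ LinearMap.ker A) (β : Dual R M) : α (A β) = α' (A β) := by
  have hzero : (α - α') (A β) = 0 := by
    rw [hA, LinearMap.mem_ker.mp h, map_zero, neg_zero]
  rwa [LinearMap.sub_apply, sub_eq_zero] at hzero

theorem skew_of_skew_prod_block {M₁ : Type*} [AddCommGroup M₁] [Module R M₁]
    (P : Dual R M₁ × Dual R M →ₗ[R] M₁ × M) (A : Dual R M →ₗ[R] M)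
    (hP : ∀ α β : Dual R M₁ × Dual R M,
      α.1 (P β).1 + α.2 (P β).2 = -(β.1 (P α).1 + β.2 (P α).2))
    (hA : ∀ η, (P (0, η)).2 = A η) (α β : Dual R M) : α (A β) = -β (A α) := by
  simpa [hA] using hP (0, α) (0, β)

end

theorem poissonDirac_bracket_independent_of_solution_general
    (S C : Type*) [AddCommGroup S] [Module ℝ S]
    [AddCommGroup C] [Module ℝ C]
    (Pmap : Module.Dual ℝ S × Module.Dual ℝ C →ₗ[ℝ] S × C)
    (Pσσ : Module.Dual ℝ S →ₗ[ℝ] S) (Pσc : Module.Dual ℝ C →ₗ[ℝ] S)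
    (Pcσ : Module.Dual ℝ S →ₗ[ℝ] C) (Pcc : Module.Dual ℝ C →ₗ[ℝ] C)
    (hblock : ∀ (ξ : Module.Dual ℝ S) (η : Module.Dual ℝ C),
      Pmap (ξ, η) = (Pσσ ξ + Pσc η, Pcσ ξ + Pcc η))
    (hskew : ∀ α β : Module.Dual ℝ S × Module.Dual ℝ C,
      α.1 (Pmap β).1 + α.2 (Pmap β).2 = -(β.1 (Pmap α).1 + β.2 (Pmap α).2))
    (ξf ξg : Module.Dual ℝ S) (ηf ηf' ηg ηg' : Module.Dual ℝ C)
    (hf : Pcσ ξf + Pcc ηf = 0) (hf' : Pcσ ξf + Pcc ηf' = 0)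
    (hg : Pcσ ξg + Pcc ηg = 0) (hg' : Pcσ ξg + Pcc ηg' = 0) :
    ηf - ηf' ∈ LinearMap.ker Pcc ∧ ηg - ηg' ∈ LinearMap.ker Pcc ∧
      ηf (Pcc ηg) = ηf' (Pcc ηg') := by
  have hPcc : ∀ α β : Dual ℝ C, α (Pcc β) = -β (Pcc α) :=
    skew_of_skew_prod_block Pmap Pcc hskew fun η => by simp [hblock]
  have hf_ker := LinearMap.sub_mem_ker_of_add_eq_zero hf hf'
  have hg_ker := LinearMap.sub_mem_ker_of_add_eq_zero hg hg'
  refine ⟨hf_ker, hg_ker, ?_⟩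
  rw [apply_eq_of_sub_mem_ker_of_skew hPcc hf_ker, LinearMap.sub_mem_ker_iff.mp hg_ker]

/-- Solutions of the Poisson–Dirac equations are determined modulo
`ker π_cc`, and this non-uniqueness does not affect the value `⟨η_f, π_cc(η_g)⟩`. -/
theorem poissonDirac_bracket_independent_of_solution
    (S C : Type*) [AddCommGroup S] [Module ℝ S] [FiniteDimensional ℝ S]
    [AddCommGroup C] [Module ℝ C] [FiniteDimensional ℝ C]
    (Pmap : Module.Dual ℝ S × Module.Dual ℝ C →ₗ[ℝ] S × C)
    (Pσσ : Module.Dual ℝ S →ₗ[ℝ] S) (Pσc : Module.Dual ℝ C →ₗ[ℝ] S)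
    (Pcσ : Module.Dual ℝ S →ₗ[ℝ] C) (Pcc : Module.Dual ℝ C →ₗ[ℝ] C)
    (hblock : ∀ (ξ : Module.Dual ℝ S) (η : Module.Dual ℝ C),
      Pmap (ξ, η) = (Pσσ ξ + Pσc η, Pcσ ξ + Pcc η))
    (hskew : ∀ α β : Module.Dual ℝ S × Module.Dual ℝ C,
      α.1 (Pmap β).1 + α.2 (Pmap β).2 = -(β.1 (Pmap α).1 + β.2 (Pmap α).2))
    (ξf ξg : Module.Dual ℝ S) (ηf ηf' ηg ηg' : Module.Dual ℝ C)
    (hf : Pcσ ξf + Pcc ηf = 0) (hf' : Pcσ ξf + Pcc ηf' = 0)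
    (hg : Pcσ ξg + Pcc ηg = 0) (hg' : Pcσ ξg + Pcc ηg' = 0) :
    ηf - ηf' ∈ LinearMap.ker Pcc ∧ ηg - ηg' ∈ LinearMap.ker Pcc ∧
      ηf (Pcc ηg) = ηf' (Pcc ηg') :=
  poissonDirac_bracket_independent_of_solution_general S C Pmap Pσσ Pσc Pcσ Pcc hblock hskew ξf ξg
    ηf ηf' ηg ηg' hf hf' hg hg'
end

section
/- Let ξ_f, ξ_g ∈ Σ* and suppose η_f, η_g ∈ C* satisfy π_cσ(ξ_f) + π_cc(η_f) = 0 and π_cσ(ξ_g) + π_cc(η_g) = 0. Then ⟨(ξ_f, η_f), π(ξ_g, η_g)⟩ = ⟨ξ_f, π_σσ(ξ_g)⟩ − ⟨η_f, π_cc(η_g)⟩. (Pointwise content of Proposition 2: the bracket of extensions f̃ = f(σ) + h(c), g̃ = g(σ) + r(c) whose Hamiltonian vector fields are tangent to the constraint set equals the Poisson–Dirac bracket formula {f,g}_PD = (δf/δσ)·{σ,σ}·(δg/δσ) − (Δf/Δc)·{c,c}·(Δg/Δc).) -/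
/-! Tangency of the Hamiltonian vector field of `f̃` says `π_cσ ξ_f + π_cc η_f = 0`; pairing with
`(0, η_g)` and using skew-symmetry then turns the mixed term `⟨ξ_f, π_σc η_g⟩` into
`−⟨η_f, π_cc η_g⟩`, while tangency of `g̃` kills the `C`-component of `π(ξ_g, η_g)`. -/

section BlockSkew

variable {R S C : Type*} [CommRing R] [AddCommGroup S] [Module R S] [AddCommGroup C] [Module R C]
  {Pmap : Module.Dual R S × Module.Dual R C →ₗ[R] S × C}
  {Pσσ : Module.Dual R S →ₗ[R] S} {Pσc : Module.Dual R C →ₗ[R] S}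
  {Pcσ : Module.Dual R S →ₗ[R] C} {Pcc : Module.Dual R C →ₗ[R] C}

theorem apply_offDiag_eq_neg_apply_diag_of_tangent
    (hblock : ∀ (ξ : Module.Dual R S) (η : Module.Dual R C),
      Pmap (ξ, η) = (Pσσ ξ + Pσc η, Pcσ ξ + Pcc η))
    (hskew : ∀ α β : Module.Dual R S × Module.Dual R C,
      α.1 (Pmap β).1 + α.2 (Pmap β).2 = -(β.1 (Pmap α).1 + β.2 (Pmap α).2))
    {ξ : Module.Dual R S} {η : Module.Dual R C} (htangent : Pcσ ξ + Pcc η = 0)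
    (η' : Module.Dual R C) :
    ξ (Pσc η') = -η (Pcc η') := by
  have hpair := hskew (ξ, η) (0, η')
  simp only [hblock, htangent, map_zero, zero_add, map_add, LinearMap.zero_apply,
    neg_zero] at hpair
  exact eq_neg_of_add_eq_zero_left hpair

end BlockSkew

theorem extension_bracket_eq_poissonDirac_bracket_general
    (S C : Type*) [AddCommGroup S] [Module ℝ S]
    [AddCommGroup C] [Module ℝ C]
    (Pmap : Module.Dual ℝ S × Module.Dual ℝ C →ₗ[ℝ] S × C)
    (Pσσ : Module.Dual ℝ S →ₗ[ℝ] S) (Pσc : Module.Dual ℝ C →ₗ[ℝ] S)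
    (Pcσ : Module.Dual ℝ S →ₗ[ℝ] C) (Pcc : Module.Dual ℝ C →ₗ[ℝ] C)
    (hblock : ∀ (ξ : Module.Dual ℝ S) (η : Module.Dual ℝ C),
      Pmap (ξ, η) = (Pσσ ξ + Pσc η, Pcσ ξ + Pcc η))
    (hskew : ∀ α β : Module.Dual ℝ S × Module.Dual ℝ C,
      α.1 (Pmap β).1 + α.2 (Pmap β).2 = -(β.1 (Pmap α).1 + β.2 (Pmap α).2))
    (ξf ξg : Module.Dual ℝ S) (ηf ηg : Module.Dual ℝ C)
    (hf : Pcσ ξf + Pcc ηf = 0) (hg : Pcσ ξg + Pcc ηg = 0) :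
    ξf (Pmap (ξg, ηg)).1 + ηf (Pmap (ξg, ηg)).2
      = ξf (Pσσ ξg) - ηf (Pcc ηg) := by
  rw [hblock, hg, map_add, map_zero, add_zero,
    apply_offDiag_eq_neg_apply_diag_of_tangent hblock hskew hf, sub_eq_add_neg]

/-- If `π_cσ(ξ_f) + π_cc(η_f) = 0` and `π_cσ(ξ_g) + π_cc(η_g) = 0`,
then `⟨(ξ_f, η_f), π(ξ_g, η_g)⟩ = ⟨ξ_f, π_σσ(ξ_g)⟩ − ⟨η_f, π_cc(η_g)⟩`
(the Poisson–Dirac bracket formula as the bracket of tangent extensions). -/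
theorem extension_bracket_eq_poissonDirac_bracket
    (S C : Type*) [AddCommGroup S] [Module ℝ S] [FiniteDimensional ℝ S]
    [AddCommGroup C] [Module ℝ C] [FiniteDimensional ℝ C]
    (Pmap : Module.Dual ℝ S × Module.Dual ℝ C →ₗ[ℝ] S × C)
    (Pσσ : Module.Dual ℝ S →ₗ[ℝ] S) (Pσc : Module.Dual ℝ C →ₗ[ℝ] S)
    (Pcσ : Module.Dual ℝ S →ₗ[ℝ] C) (Pcc : Module.Dual ℝ C →ₗ[ℝ] C)
    (hblock : ∀ (ξ : Module.Dual ℝ S) (η : Module.Dual ℝ C),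
      Pmap (ξ, η) = (Pσσ ξ + Pσc η, Pcσ ξ + Pcc η))
    (hskew : ∀ α β : Module.Dual ℝ S × Module.Dual ℝ C,
      α.1 (Pmap β).1 + α.2 (Pmap β).2 = -(β.1 (Pmap α).1 + β.2 (Pmap α).2))
    (ξf ξg : Module.Dual ℝ S) (ηf ηg : Module.Dual ℝ C)
    (hf : Pcσ ξf + Pcc ηf = 0) (hg : Pcσ ξg + Pcc ηg = 0) :
    ξf (Pmap (ξg, ηg)).1 + ηf (Pmap (ξg, ηg)).2
      = ξf (Pσσ ξg) - ηf (Pcc ηg) :=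
  extension_bracket_eq_poissonDirac_bracket_general S C Pmap Pσσ Pσc Pcσ Pcc hblock hskew ξf ξg ηf
    ηg hf hg
end

section
/- Let W ⊆ V be a subspace and let α̃, α̃', β̃, β̃' ∈ V* all vanish identically on π(W°). If α̃ and α̃' agree on W and β̃ and β̃' agree on W, then ⟨α̃, π(β̃)⟩ = ⟨α̃', π(β̃')⟩. (The induced pointwise bivector on a Poisson–Dirac submanifold is well defined: the value π_p((df_p)~, (dg_p)~) does not depend on the choice of extensions vanishing on (T_pN)^{π⊥}.) -/
theorem Submodule.sub_mem_dualAnnihilator_of_eqOn {R M : Type*} [CommRing R] [AddCommGroup M]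
    [Module R M] {W : Submodule R M} {α α' : Module.Dual R M} (h : ∀ w ∈ W, α w = α' w) :
    α - α' ∈ W.dualAnnihilator :=
  (Submodule.mem_dualAnnihilator _).2 fun w hw => by
    rw [LinearMap.sub_apply, h w hw, sub_self]

theorem apply_map_eq_of_eqOn {R M : Type*} [CommRing R] [AddCommGroup M] [Module R M]
    (π : Module.Dual R M →ₗ[R] M) {W : Submodule R M} {α α' β : Module.Dual R M}
    (hα : ∀ w ∈ W, α w = α' w) (hβ : ∀ v ∈ W.dualAnnihilator.map π, β v = 0) :
    β (π α) = β (π α') := by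
  have h := hβ _ (Submodule.mem_map_of_mem (Submodule.sub_mem_dualAnnihilator_of_eqOn hα))
  rwa [map_sub, map_sub, sub_eq_zero] at h

theorem induced_bivector_well_defined_general
    (V : Type*) [AddCommGroup V] [Module ℝ V]
    (Pmap : Module.Dual ℝ V →ₗ[ℝ] V)
    (hskew : ∀ α β : Module.Dual ℝ V, α (Pmap β) = -(β (Pmap α)))
    (W : Submodule ℝ V)
    (αt αt' βt βt' : Module.Dual ℝ V)
    (hα0' : ∀ v ∈ Submodule.map Pmap W.dualAnnihilator, αt' v = 0)
    (hβ0 : ∀ v ∈ Submodule.map Pmap W.dualAnnihilator, βt v = 0)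
    (hα : ∀ w ∈ W, αt w = αt' w) (hβ : ∀ w ∈ W, βt w = βt' w) :
    αt (Pmap βt) = αt' (Pmap βt') :=
  calc αt (Pmap βt) = -(βt (Pmap αt)) := hskew _ _
    _ = -(βt (Pmap αt')) := by rw [apply_map_eq_of_eqOn Pmap hα hβ0]
    _ = αt' (Pmap βt) := (hskew _ _).symm
    _ = αt' (Pmap βt') := apply_map_eq_of_eqOn Pmap hβ hα0'

/-- The induced pointwise bivector on a Poisson–Dirac submanifold
is well defined: if `α̃, α̃', β̃, β̃'` all vanish on `π(W°)`, `α̃ = α̃'` on `W`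
and `β̃ = β̃'` on `W`, then `⟨α̃, π(β̃)⟩ = ⟨α̃', π(β̃')⟩`. -/
theorem induced_bivector_well_defined
    (V : Type*) [AddCommGroup V] [Module ℝ V] [FiniteDimensional ℝ V]
    (Pmap : Module.Dual ℝ V →ₗ[ℝ] V)
    (hskew : ∀ α β : Module.Dual ℝ V, α (Pmap β) = -(β (Pmap α)))
    (W : Submodule ℝ V)
    (αt αt' βt βt' : Module.Dual ℝ V)
    (hα0 : ∀ v ∈ Submodule.map Pmap W.dualAnnihilator, αt v = 0)
    (hα0' : ∀ v ∈ Submodule.map Pmap W.dualAnnihilator, αt' v = 0)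
    (hβ0 : ∀ v ∈ Submodule.map Pmap W.dualAnnihilator, βt v = 0)
    (hβ0' : ∀ v ∈ Submodule.map Pmap W.dualAnnihilator, βt' v = 0)
    (hα : ∀ w ∈ W, αt w = αt' w) (hβ : ∀ w ∈ W, βt w = βt' w) :
    αt (Pmap βt) = αt' (Pmap βt') :=
  induced_bivector_well_defined_general V Pmap hskew W αt αt' βt βt' hα0' hβ0 hα hβ
end

section
/- Define ω on range(π) by ω(π(α), π(β)) := ⟨α, π(β)⟩; this is well defined (the value depends only on π(α) and π(β), not on the choice of preimages α, β). If moreover W ∩ π(W°) = {0}, then the restriction of ω to the subspace W ∩ range(π) is nondegenerate, i.e. W ∩ range(π) is a symplectic subspace of the image of π. (Condition PD.1 implies the intersection of the tangent space of the submanifold with the image of π^# is a symplectic subspace.) -/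
/-! Skew-symmetry turns `⟨α, π β⟩ = 0` into `⟨β, π α⟩ = 0`, so `π⁻¹(W)` is exactly the annihilator
of `π(W°)`, and by double annihilation the vectors `π α` that are `ω`-orthogonal to all of
`W ∩ range π` form `π(W°)`. A degenerate vector of `W ∩ range π` thus lies in `W ∩ π(W°) = 0`. -/

open Submodule

section SkewDualMap

variable {K V : Type*} [Field K] [AddCommGroup V] [Module K V] {π : Module.Dual K V →ₗ[K] V}

theorem apply_eq_apply_of_skew (hπ : ∀ α β : Module.Dual K V, α (π β) = -(β (π α)))
    {α α' β β' : Module.Dual K V} (hα : π α = π α') (hβ : π β = π β') :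
    α (π β) = α' (π β') := by
  rw [hβ, hπ α β', hα, ← hπ α' β']

theorem apply_eq_zero_iff_of_skew (hπ : ∀ α β : Module.Dual K V, α (π β) = -(β (π α)))
    (α β : Module.Dual K V) : α (π β) = 0 ↔ β (π α) = 0 := by
  rw [hπ, neg_eq_zero]

theorem comap_eq_dualAnnihilator_map_dualAnnihilator_of_skew
    (hπ : ∀ α β : Module.Dual K V, α (π β) = -(β (π α))) (W : Submodule K V) :
    W.comap π = (W.dualAnnihilator.map π).dualAnnihilator := by
  ext γ
  conv_lhs => rw [mem_comap, ← Subspace.dualAnnihilator_dualCoannihilator_eq (W := W)]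
  simp only [mem_dualCoannihilator, mem_dualAnnihilator, mem_map, forall_exists_index, and_imp,
    forall_apply_eq_imp_iff₂, apply_eq_zero_iff_of_skew hπ γ]

theorem dualCoannihilator_comap_eq_map_dualAnnihilator_of_skew
    (hπ : ∀ α β : Module.Dual K V, α (π β) = -(β (π α))) (W : Submodule K V) :
    (W.comap π).dualCoannihilator = W.dualAnnihilator.map π := by
  rw [comap_eq_dualAnnihilator_map_dualAnnihilator_of_skew hπ,
    Subspace.dualAnnihilator_dualCoannihilator_eq]

theorem map_eq_zero_of_forall_apply_eq_zero_of_skew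
    (hπ : ∀ α β : Module.Dual K V, α (π β) = -(β (π α))) {W : Submodule K V}
    (hW : W ⊓ W.dualAnnihilator.map π = ⊥) {α : Module.Dual K V} (hαW : π α ∈ W)
    (hα : ∀ β : Module.Dual K V, π β ∈ W → α (π β) = 0) : π α = 0 := by
  have hα_orth : π α ∈ W.dualAnnihilator.map π := by
    rw [← dualCoannihilator_comap_eq_map_dualAnnihilator_of_skew hπ, mem_dualCoannihilator]
    exact fun β hβ ↦ (apply_eq_zero_iff_of_skew hπ α β).mp (hα β hβ)
  exact (mem_bot K).mp (hW ▸ mem_inf.mpr ⟨hαW, hα_orth⟩)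

end SkewDualMap

theorem image_symplectic_form_well_defined_and_nondegenerate_on_intersection_general
    (V : Type*) [AddCommGroup V] [Module ℝ V]
    (Pmap : Module.Dual ℝ V →ₗ[ℝ] V)
    (hskew : ∀ α β : Module.Dual ℝ V, α (Pmap β) = -(β (Pmap α)))
    (W : Submodule ℝ V) :
    (∀ α α' β β' : Module.Dual ℝ V,
        Pmap α = Pmap α' → Pmap β = Pmap β' → α (Pmap β) = α' (Pmap β'))
    ∧ (W ⊓ Submodule.map Pmap W.dualAnnihilator = ⊥ →
        ∀ α : Module.Dual ℝ V, Pmap α ∈ W →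
          (∀ β : Module.Dual ℝ V, Pmap β ∈ W → α (Pmap β) = 0) →
          Pmap α = 0) :=
  ⟨fun _ _ _ _ ↦ apply_eq_apply_of_skew hskew,
    fun hW _ ↦ map_eq_zero_of_forall_apply_eq_zero_of_skew hskew hW⟩

/-- The form `ω(π(α), π(β)) := ⟨α, π(β)⟩` on `range(π)` is well
defined, and if `W ∩ π(W°) = {0}` then its restriction to `W ∩ range(π)` is
nondegenerate: `W ∩ range(π)` is a symplectic subspace of the image of `π`. -/
theorem image_symplectic_form_well_defined_and_nondegenerate_on_intersection
    (V : Type*) [AddCommGroup V] [Module ℝ V] [FiniteDimensional ℝ V]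
    (Pmap : Module.Dual ℝ V →ₗ[ℝ] V)
    (hskew : ∀ α β : Module.Dual ℝ V, α (Pmap β) = -(β (Pmap α)))
    (W : Submodule ℝ V) :
    (∀ α α' β β' : Module.Dual ℝ V,
        Pmap α = Pmap α' → Pmap β = Pmap β' → α (Pmap β) = α' (Pmap β'))
    ∧ (W ⊓ Submodule.map Pmap W.dualAnnihilator = ⊥ →
        ∀ α : Module.Dual ℝ V, Pmap α ∈ W →
          (∀ β : Module.Dual ℝ V, Pmap β ∈ W → α (Pmap β) = 0) →
          Pmap α = 0) :=
  image_symplectic_form_well_defined_and_nondegenerate_on_intersection_general V Pmap hskew W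
end

section
/- Suppose W ∩ π(W°) = {0}. Define the induced skew bilinear form π_W on linear functionals of W by π_W(α, β) := ⟨α̃, π(β̃)⟩, where α̃, β̃ ∈ V* are any extensions of α, β that vanish on π(W°) (such extensions exist and the value is independent of the choice). Then rank(π) = rank(π_W) + dim π(W°), where the rank of a bilinear form is the rank of its associated linear map. (Linear theory of Poisson–Dirac submanifolds: rk T_pN^{π⊥} + rk π_{N,p} = rk π_p.) -/
/-!
Write `N = π(W°)`. Skew-symmetry of `π` gives `N° = π⁻¹(W)`, so `π(N°) = range π ∩ W`, and
since `W ∩ N = 0` we have `W° + N° = V*`, whence `range π = π(W°) + π(N°) = N ⊕ (range π ∩ W)`.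
On the other hand every functional on `W` extends to one in `N°`, so `π_W` is the form
`(γ, δ) ↦ γ(π δ)` on `N°` pushed down along the surjection `N° → W*`; its radical is exactly
`ker π ∩ N°` because `π γ ∈ W ∩ N = 0` as soon as `γ(π δ) = 0` for all `δ ∈ N°`.
Hence `rank π_W = dim π(N°) = dim (range π ∩ W)`.
-/

open Module Submodule LinearMap

namespace Subspace

variable {K V : Type*} [Field K] [AddCommGroup V] [Module K V]

theorem dualAnnihilator_sup_eq_top_of_disjoint {W N : Subspace K V} (h : Disjoint W N) :
    W.dualAnnihilator ⊔ N.dualAnnihilator = ⊤ := by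
  rw [← dualAnnihilator_inf_eq, h.eq_bot, dualAnnihilator_bot]

theorem exists_mem_dualAnnihilator_dualRestrict_eq {W N : Subspace K V} (h : Disjoint W N)
    (β : Dual K W) : ∃ γ ∈ N.dualAnnihilator, W.dualRestrict γ = β := by
  obtain ⟨γ₀, rfl⟩ := W.dualRestrict_surjective β
  have hγ₀ : γ₀ ∈ W.dualAnnihilator ⊔ N.dualAnnihilator := by
    rw [dualAnnihilator_sup_eq_top_of_disjoint h]; trivial
  obtain ⟨α, hα, γ, hγ, rfl⟩ := mem_sup.mp hγ₀
  rw [← W.dualRestrict_ker_eq_dualAnnihilator] at hα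
  exact ⟨γ, hγ, by rw [map_add, mem_ker.mp hα, zero_add]⟩

end Subspace

section SkewMap

variable {K V : Type*} [Field K] [AddCommGroup V] [Module K V] {π : Dual K V →ₗ[K] V}

theorem dualAnnihilator_map_dualAnnihilator_of_skew
    (hπ : ∀ α β : Dual K V, α (π β) = -(β (π α))) (W : Subspace K V) :
    (W.dualAnnihilator.map π).dualAnnihilator = W.comap π := by
  ext γ
  conv_rhs => rw [mem_comap, ← W.dualAnnihilator_dualCoannihilator_eq, mem_dualCoannihilator]
  simp only [mem_dualAnnihilator, mem_map, forall_exists_index, and_imp, forall_apply_eq_imp_iff₂]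
  exact forall₂_congr fun φ _ => by rw [hπ, neg_eq_zero]

theorem range_eq_inf_sup_map_dualAnnihilator_of_skew
    (hπ : ∀ α β : Dual K V, α (π β) = -(β (π α))) {W : Subspace K V}
    (hW : Disjoint W (W.dualAnnihilator.map π)) :
    range π = range π ⊓ W ⊔ W.dualAnnihilator.map π := by
  rw [← map_comap_eq, ← dualAnnihilator_map_dualAnnihilator_of_skew hπ, sup_comm,
    ← Submodule.map_sup, Subspace.dualAnnihilator_sup_eq_top_of_disjoint hW, range_eq_map]

theorem finrank_range_eq_finrank_inf_add_finrank_map_of_skew [FiniteDimensional K V]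
    (hπ : ∀ α β : Dual K V, α (π β) = -(β (π α))) {W : Subspace K V}
    (hW : Disjoint W (W.dualAnnihilator.map π)) :
    finrank K (range π) =
      finrank K ↥(range π ⊓ W) + finrank K (W.dualAnnihilator.map π) := by
  have h := finrank_sup_add_finrank_inf_eq (range π ⊓ W) (W.dualAnnihilator.map π)
  rw [← range_eq_inf_sup_map_dualAnnihilator_of_skew hπ hW,
    (hW.mono_left inf_le_right).eq_bot, finrank_bot, add_zero] at h
  exact h

theorem induced_dualRestrict_eq_zero_iff_of_skew
    (hπ : ∀ α β : Dual K V, α (π β) = -(β (π α))) {W : Subspace K V}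
    (hW : Disjoint W (W.dualAnnihilator.map π)) (B : Dual K W →ₗ[K] Dual K W →ₗ[K] K)
    (hB : ∀ γ ∈ (W.dualAnnihilator.map π).dualAnnihilator,
      ∀ δ ∈ (W.dualAnnihilator.map π).dualAnnihilator,
        B (W.dualRestrict γ) (W.dualRestrict δ) = γ (π δ))
    {γ : Dual K V} (hγ : γ ∈ (W.dualAnnihilator.map π).dualAnnihilator) :
    B (W.dualRestrict γ) = 0 ↔ π γ = 0 := by
  have hπγ : π γ ∈ W := by
    rwa [dualAnnihilator_map_dualAnnihilator_of_skew hπ] at hγ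
  constructor
  · intro hB0
    have hπγN : π γ ∈ W.dualAnnihilator.map π := by
      rw [← Subspace.dualAnnihilator_dualCoannihilator_eq (W := W.dualAnnihilator.map π),
        mem_dualCoannihilator]
      intro δ hδ
      rw [hπ, ← hB γ hγ δ hδ, hB0, LinearMap.zero_apply, neg_zero]
    exact (disjoint_iff_inf_le.mp hW) ⟨hπγ, hπγN⟩
  · intro hπ0
    ext β
    obtain ⟨δ, hδ, rfl⟩ := Subspace.exists_mem_dualAnnihilator_dualRestrict_eq hW β
    rw [hB γ hγ δ hδ, hπ, hπ0, map_zero, neg_zero, LinearMap.zero_apply]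

theorem finrank_range_induced_eq_finrank_inf_of_skew [FiniteDimensional K V]
    (hπ : ∀ α β : Dual K V, α (π β) = -(β (π α))) {W : Subspace K V}
    (hW : Disjoint W (W.dualAnnihilator.map π)) (B : Dual K W →ₗ[K] Dual K W →ₗ[K] K)
    (hB : ∀ γ ∈ (W.dualAnnihilator.map π).dualAnnihilator,
      ∀ δ ∈ (W.dualAnnihilator.map π).dualAnnihilator,
        B (W.dualRestrict γ) (W.dualRestrict δ) = γ (π δ)) :
    finrank K (range B) = finrank K ↥(range π ⊓ W) := by
  set A := (W.dualAnnihilator.map π).dualAnnihilator with hA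
  have hS : range (W.dualRestrict.domRestrict A) = ⊤ := by
    refine range_eq_top.mpr fun β => ?_
    obtain ⟨γ, hγ, h⟩ := Subspace.exists_mem_dualAnnihilator_dualRestrict_eq hW β
    exact ⟨⟨γ, hγ⟩, h⟩
  set f := B ∘ₗ W.dualRestrict.domRestrict A
  have hker : ker f = ker (π.domRestrict A) :=
    ext fun γ => induced_dualRestrict_eq_zero_iff_of_skew hπ hW B hB γ.2
  have hB_rank := finrank_range_add_finrank_ker (V := A) f
  have hπ_rank := finrank_range_add_finrank_ker (V := A) (π.domRestrict A)
  rw [range_comp_of_range_eq_top _ hS, hker] at hB_rank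
  have hmap : A.map π = range π ⊓ W := by
    rw [hA, dualAnnihilator_map_dualAnnihilator_of_skew hπ, map_comap_eq]
  rw [range_domRestrict, hmap] at hπ_rank
  omega

end SkewMap

/-- Linear theory of Poisson–Dirac submanifolds:
`rank(π) = rank(π_W) + dim π(W°)`, where `π_W` is the induced bilinear form on
linear functionals of `W`, characterized by `π_W(α, β) = ⟨α̃, π(β̃)⟩` for any
extensions `α̃, β̃` of `α, β` vanishing on `π(W°)`. -/
theorem rank_decomposition_poissonDirac
    (V : Type*) [AddCommGroup V] [Module ℝ V] [FiniteDimensional ℝ V]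
    (Pmap : Module.Dual ℝ V →ₗ[ℝ] V)
    (hskew : ∀ α β : Module.Dual ℝ V, α (Pmap β) = -(β (Pmap α)))
    (W : Submodule ℝ V)
    (hW : W ⊓ Submodule.map Pmap W.dualAnnihilator = ⊥)
    (B : Module.Dual ℝ W →ₗ[ℝ] Module.Dual ℝ W →ₗ[ℝ] ℝ)
    (hB : ∀ (α β : Module.Dual ℝ W) (αt βt : Module.Dual ℝ V),
      (∀ w : W, αt (w : V) = α w) → (∀ w : W, βt (w : V) = β w) →
      (∀ v ∈ Submodule.map Pmap W.dualAnnihilator, αt v = 0) →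
      (∀ v ∈ Submodule.map Pmap W.dualAnnihilator, βt v = 0) →
      B α β = αt (Pmap βt)) :
    Module.finrank ℝ (LinearMap.range Pmap)
      = Module.finrank ℝ (LinearMap.range B)
        + Module.finrank ℝ (Submodule.map Pmap W.dualAnnihilator) := by
  have hdisj : Disjoint W (W.dualAnnihilator.map Pmap) := disjoint_iff.mpr hW
  have hB' : ∀ γ ∈ (W.dualAnnihilator.map Pmap).dualAnnihilator,
      ∀ δ ∈ (W.dualAnnihilator.map Pmap).dualAnnihilator,
        B (W.dualRestrict γ) (W.dualRestrict δ) = γ (Pmap δ) := fun γ hγ δ hδ =>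
    hB _ _ γ δ (fun _ => rfl) (fun _ => rfl) ((mem_dualAnnihilator γ).mp hγ)
      ((mem_dualAnnihilator δ).mp hδ)
  rw [finrank_range_eq_finrank_inf_add_finrank_map_of_skew hskew hdisj,
    finrank_range_induced_eq_finrank_inf_of_skew hskew hdisj B hB']
end

section
/- Let u, v ∈ ℝ, p = (u, v, u, v), and let α, β ∈ ℝ⁴ represent covectors in the dual standard basis such that Π(p)·α ∈ T and Π(p)·β ∈ T. Then αᵀ Π(p) β = u v (α_u β_v − α_v β_u), where α_u := α₁ + α₃ = α·(1,0,1,0), α_v := α₂ + α₄ = α·(0,1,0,1), and similarly for β. (Computation of the induced Poisson bivector π_N on the Poisson–Dirac submanifold N, evaluated on extensions of one-forms whose images under the anchor map are tangent to N: π_N is proportional to uv ∂u∧∂v.) -/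
/-! On `N` every nonzero entry of `Π(u,v,u,v)` is `± u v`, and `αᵀ Π β` differs from
`u v (α_u β_v − α_v β_u)` by `2 u v (α₂ β₃ − α₃ β₂)`. Comparing the first with the third and
the second with the fourth coordinate of `Π α ∈ T` gives `u v α₂ = u v α₃ = 0` (1-based indices), which kills
this correction term. -/

open Matrix

/-- The matrix of the anchor map of the Lotka–Volterra Poisson bracket
at the point `(x,y,z,w)`. -/
def LV (x y z w : ℝ) : Matrix (Fin 4) (Fin 4) ℝ :=
  !![0, x * y, 0, x * w;
     -(x * y), 0, y * z, 0;
     0, -(y * z), 0, z * w;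
     -(x * w), 0, -(z * w), 0]

/-- The tangent space of the graph `N = {(u,v,u,v)}`. -/
def Tgraph : Submodule ℝ (Fin 4 → ℝ) :=
  Submodule.span ℝ {![1, 0, 1, 0], ![0, 1, 0, 1]}

lemma mem_Tgraph_iff (w : Fin 4 → ℝ) : w ∈ Tgraph ↔ w 0 = w 2 ∧ w 1 = w 3 := by
  rw [Tgraph, Submodule.mem_span_pair]
  constructor
  · rintro ⟨c, d, rfl⟩
    simp
  · rintro ⟨h02, h13⟩
    refine ⟨w 0, w 1, funext fun i => ?_⟩
    fin_cases i <;> simp [h02, h13]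

lemma LV_mulVec_apply (u v : ℝ) (α : Fin 4 → ℝ) :
    (LV u v u v).mulVec α = ![u * v * (α 1 + α 3), u * v * (α 2 - α 0),
      u * v * (α 3 - α 1), -(u * v * (α 0 + α 2))] := by
  ext i
  fin_cases i <;> simp [LV, mulVec, dotProduct, Fin.sum_univ_four] <;> ring

lemma mul_apply_eq_zero_of_LV_mulVec_mem_Tgraph {u v : ℝ} {α : Fin 4 → ℝ}
    (hα : (LV u v u v).mulVec α ∈ Tgraph) : u * v * α 1 = 0 ∧ u * v * α 2 = 0 := by
  rw [mem_Tgraph_iff, LV_mulVec_apply] at hα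
  simp only [Matrix.cons_val] at hα
  obtain ⟨h02, h13⟩ := hα
  constructor <;> linarith

lemma dotProduct_LV_mulVec (u v : ℝ) (α β : Fin 4 → ℝ) :
    α ⬝ᵥ (LV u v u v).mulVec β
      = u * v * ((α 0 + α 2) * (β 1 + β 3) - (α 1 + α 3) * (β 0 + β 2))
        + 2 * (u * v * α 1 * β 2 - u * v * α 2 * β 1) := by
  simp only [dotProduct, LV_mulVec_apply, Fin.sum_univ_four, cons_val_zero, cons_val_one, cons_val,
    mul_neg]
  ring

theorem LV_graph_induced_bivector_general (u v : ℝ) (α β : Fin 4 → ℝ)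
    (hα : (LV u v u v).mulVec α ∈ Tgraph) :
    α ⬝ᵥ (LV u v u v).mulVec β
      = u * v * ((α 0 + α 2) * (β 1 + β 3) - (α 1 + α 3) * (β 0 + β 2)) := by
  obtain ⟨hα₁, hα₂⟩ := mul_apply_eq_zero_of_LV_mulVec_mem_Tgraph hα
  rw [dotProduct_LV_mulVec, hα₁, hα₂]
  ring

/-- For covectors `α, β` whose images under the anchor map are
tangent to `N`, the induced bivector on the Poisson–Dirac submanifold `N` is
`αᵀ Π(p) β = u v (α_u β_v − α_v β_u)` with `α_u = α₁ + α₃`, `α_v = α₂ + α₄`. -/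
theorem LV_graph_induced_bivector (u v : ℝ) (α β : Fin 4 → ℝ)
    (hα : (LV u v u v).mulVec α ∈ Tgraph)
    (hβ : (LV u v u v).mulVec β ∈ Tgraph) :
    α ⬝ᵥ (LV u v u v).mulVec β
      = u * v * ((α 0 + α 2) * (β 1 + β 3) - (α 1 + α 3) * (β 0 + β 2)) :=
  LV_graph_induced_bivector_general u v α β hα
end
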